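/- Let p be odd and let PO_p(n) denote the number of primitive periodic orbits of length n of the doubling-type shift, defined via Tr(A_V^n) = ∑_{d|n} d·PO_p(d) where A_V is the binary-graph adjacency matrix with V = p·2^r. Then PO_p(n) = L_2(n) + β_p(n), where L_2(n) is the number of binary Lyndon words of length n and β_p(n) is the number of n-cycles of the doubling map j ↦ 2j (mod p) on {1,...,p−1}. In particular PO_p(n) = L_2(n) whenever n > p. -/

import Mathlib

open Matrix Finset

/-- A Lyndon word: a nonempty word strictly lexicographically smaller than
all of its nontrivial cyclic rotations. -/
def IsLyndon {α : Type*} [LinearOrder α] (w : List α) : Prop :=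
  w ≠ [] ∧ ∀ i, 0 < i → i < w.length → w < w.rotate i

/-- The number of binary Lyndon words of length `n`. -/
noncomputable def L2 (n : ℕ) : ℕ :=
  Nat.card {w : List Bool // w.length = n ∧ IsLyndon w}

/-- Adjacency matrix of the binary graph on `V` vertices. -/
def binAdj (V : ℕ) : Matrix (Fin V) (Fin V) ℕ := fun i j =>
  (if (2 * i.val) % V = j.val then 1 else 0) +
    (if (2 * i.val + 1) % V = j.val then 1 else 0)

/-- The minimal period of `j` under the doubling map modulo `p`. -/
noncomputable def dblPeriod (p j : ℕ) : ℕ :=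
  sInf {c : ℕ | 0 < c ∧ 2 ^ c * j % p = j % p}

/-- `β_p(c)`: the number of cycles of length `c` of the doubling map
`j ↦ 2j (mod p)` on `{1, …, p−1}`. -/
noncomputable def betap (p c : ℕ) : ℕ :=
  ((Finset.Ico 1 p).filter (fun j => dblPeriod p j = c)).card / c

section ListPart
open List


variable {α : Type*}

/-- `m`-fold concatenation of a word. -/
def pw (u : List α) (m : ℕ) : List α := (List.replicate m u).flatten

lemma pw_zero (u : List α) : pw u 0 = [] := rfl
lemma pw_succ (u : List α) (m : ℕ) : pw u (m+1) = u ++ pw u m := rfl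

lemma pw_one (u : List α) : pw u 1 = u := by simp [pw]

lemma pw_succ' (u : List α) (m : ℕ) : pw u (m+1) = pw u m ++ u := by
  induction m with
  | zero => simp [pw]
  | succ m ih => rw [pw, List.replicate_succ', List.flatten_append]; simp [pw]

lemma pw_length (u : List α) (m : ℕ) : (pw u m).length = m * u.length := by
  induction m with
  | zero => simp [pw]
  | succ m ih => rw [pw_succ, length_append, ih]; ring

lemma pw_take (u : List α) (m : ℕ) (hm : 0 < m) : (pw u m).take u.length = u := by
  obtain ⟨m, rfl⟩ := Nat.exists_eq_succ_of_ne_zero hm.ne'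
  rw [pw_succ, List.take_left]

lemma pw_rotate (u : List α) (m : ℕ) : (pw u m).rotate u.length = pw u m := by
  cases m with
  | zero => simp [pw]
  | succ m =>
    have h1 : (pw u (m+1)).rotate u.length = ((u ++ pw u m).rotate u.length) := by rw [pw_succ]
    rw [h1, List.rotate_append_length_eq, ← pw_succ']

lemma pw_rotate_mul (u : List α) (m q : ℕ) : (pw u m).rotate (u.length * q) = pw u m := by
  induction q with
  | zero => simp
  | succ q ih => rw [Nat.mul_succ, ← List.rotate_rotate, ih, pw_rotate]

lemma pw_rotate_mod (u : List α) (m j : ℕ) :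
    (pw u m).rotate j = (pw u m).rotate (j % u.length) := by
  conv_lhs => rw [← Nat.div_add_mod j u.length]
  rw [mul_comm, ← List.rotate_rotate]
  rw [mul_comm, pw_rotate_mul]

/-- auxiliary: `b ++ (a++b)^m ++ a = (b++a)^(m+1)` -/
lemma pw_swap (a b : List α) (m : ℕ) : b ++ pw (a ++ b) m ++ a = pw (b ++ a) (m+1) := by
  induction m with
  | zero => simp [pw]
  | succ m ih =>
    rw [pw_succ (a++b) m, pw_succ]
    calc b ++ (a ++ b ++ pw (a ++ b) m) ++ a
        = (b ++ a) ++ (b ++ pw (a ++ b) m ++ a) := by simp [append_assoc]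
      _ = (b ++ a) ++ pw (b ++ a) (m+1) := by rw [ih]

lemma pw_rotate_of_le (u : List α) (m j : ℕ) (hj : j ≤ u.length) :
    (pw u m).rotate j = pw (u.rotate j) m := by
  cases m with
  | zero => simp [pw]
  | succ m =>
    have hj2 : j ≤ (pw u (m+1)).length := by
      rw [pw_length]; calc j ≤ u.length := hj
        _ ≤ (m+1) * u.length := Nat.le_mul_of_pos_left _ (Nat.succ_pos m)
    rw [List.rotate_eq_drop_append_take hj2, List.rotate_eq_drop_append_take hj]
    rw [pw_succ, List.drop_append_of_le_length hj, List.take_append_of_le_length hj]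
    have := pw_swap (u.take j) (u.drop j) m
    rw [List.take_append_drop] at this
    rw [append_assoc, ← append_assoc, this]

lemma lex_append_of_length_eq {r : α → α → Prop} :
    ∀ {a b : List α} (c d : List α), a.length = b.length → List.Lex r a b →
      List.Lex r (a ++ c) (b ++ d)
  | _, _, _, _, h, List.Lex.nil => by simp at h
  | _, _, c, d, h, List.Lex.rel hr => List.Lex.rel hr
  | _, _, c, d, h, List.Lex.cons hl => List.Lex.cons (lex_append_of_length_eq c d (by simpa using h) hl)

variable [LinearOrder α]

lemma lt_append_of_length_eq {a b : List α} (c d : List α) (h : a.length = b.length)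
    (hab : a < b) : a ++ c < b ++ d := lex_append_of_length_eq c d h hab

lemma pw_lt_pw {u v : List α} (h : u < v) (hl : u.length = v.length) (m : ℕ) (hm : 0 < m) :
    pw u m < pw v m := by
  obtain ⟨m, rfl⟩ := Nat.exists_eq_succ_of_ne_zero hm.ne'
  rw [pw_succ, pw_succ]
  exact lt_append_of_length_eq _ _ hl h

/-- minimal rotation period -/
noncomputable def minPer (v : List α) : ℕ := sInf {i | 0 < i ∧ v.rotate i = v}

lemma minPer_spec (v : List α) (hv : v ≠ []) : 0 < minPer v ∧ v.rotate (minPer v) = v := by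
  have h : v.length ∈ {i | 0 < i ∧ v.rotate i = v} :=
    ⟨List.length_pos_iff.mpr hv, List.rotate_length v⟩
  exact Nat.sInf_mem ⟨v.length, h⟩

lemma minPer_le (v : List α) {i : ℕ} (hi : 0 < i) (h : v.rotate i = v) : minPer v ≤ i :=
  Nat.sInf_le ⟨hi, h⟩

lemma rotate_mul_of_rotate {v : List α} {d : ℕ} (h : v.rotate d = v) (q : ℕ) :
    v.rotate (d * q) = v := by
  induction q with
  | zero => simp
  | succ q ih => rw [Nat.mul_succ, ← List.rotate_rotate, ih, h]

lemma minPer_dvd (v : List α) (hv : v ≠ []) {i : ℕ} (h : v.rotate i = v) : minPer v ∣ i := by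
  obtain ⟨hd0, hrot⟩ := minPer_spec v hv
  set d := minPer v
  have h1 : v.rotate (i % d) = v := by
    have h3 := h
    rw [← Nat.div_add_mod i d, ← List.rotate_rotate, rotate_mul_of_rotate hrot] at h3
    exact h3
  rcases Nat.eq_zero_or_pos (i % d) with h2 | h2
  · exact Nat.dvd_of_mod_eq_zero h2
  · exact absurd (minPer_le v h2 h1) (not_le.mpr (Nat.mod_lt _ hd0))

lemma eq_pw_of_rotate_aux {d : ℕ} (hd : 0 < d) :
    ∀ n (l : List α), l.length = n → l.rotate d = l → d ∣ l.length →
      l = pw (l.take d) (l.length / d) := by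
  intro n
  induction n using Nat.strong_induction_on with
  | _ n ih =>
    intro l hln hrot hdvd
    rcases Nat.eq_zero_or_pos l.length with h0 | h0
    · obtain rfl : l = [] := List.eq_nil_of_length_eq_zero h0
      simp [pw]
    have hdle : d ≤ l.length := Nat.le_of_dvd h0 hdvd
    rcases eq_or_lt_of_le hdle with heq | hlt
    · rw [← heq, Nat.div_self hd, List.take_of_length_le (le_of_eq heq.symm), pw_one]
    · -- l.length > d
      set t := l.take d with ht
      set s := l.drop d with hs
      have htl : t.length = d := by rw [ht, List.length_take]; omega
      have hts : t ++ s = l := List.take_append_drop d l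
      have hst : s ++ t = l := by
        conv_rhs => rw [← hrot, List.rotate_eq_drop_append_take hdle]
      have hcomm : s ++ t = t ++ s := by rw [hst, hts]
      have hsl : s.length = l.length - d := by rw [hs, List.length_drop]
      have hdsle : d ≤ s.length := by
        obtain ⟨c, hc⟩ := hdvd
        have hc2 : 2 ≤ c := by
          by_contra hcon
          push_neg at hcon
          interval_cases c <;> omega
        have h2d : 2 * d ≤ d * c := by nlinarith
        omega
      have hstake : s.take d = t := by
        have h5 := congrArg (fun x : List α => List.take d x) hcomm
        rwa [List.take_append_of_le_length hdsle, List.take_left' htl] at h5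
      have hsdrop : s.drop d ++ t = s := by
        have h5 := congrArg (fun x : List α => List.drop d x) hcomm
        rw [List.drop_append_of_le_length hdsle, List.drop_left' htl] at h5
        exact h5
      have hsrot : s.rotate d = s := by
        rw [List.rotate_eq_drop_append_take hdsle, hstake, hsdrop]
      have hsdvd : d ∣ s.length := by rw [hsl]; exact Nat.dvd_sub hdvd dvd_rfl
      have hslt : s.length < n := by omega
      have hrec := ih s.length hslt s rfl hsrot hsdvd
      rw [hstake] at hrec
      have hdiv : l.length / d = s.length / d + 1 := by
        obtain ⟨c, hc⟩ := hdvd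
        have hc1 : 1 ≤ c := by
          by_contra hcon
          push_neg at hcon
          interval_cases c <;> omega
        obtain ⟨c', rfl⟩ : ∃ c', c = c' + 1 := ⟨c - 1, by omega⟩
        have hexp : d * (c' + 1) = d * c' + d := by ring
        rw [hsl, hc, hexp, Nat.add_sub_cancel, Nat.add_div_right _ hd]
      rw [hdiv, pw_succ, ← hrec, hts]

lemma eq_pw_of_rotate {d : ℕ} (hd : 0 < d) (l : List α) (hrot : l.rotate d = l)
    (hdvd : d ∣ l.length) : l = pw (l.take d) (l.length / d) :=
  eq_pw_of_rotate_aux hd l.length l rfl hrot hdvd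

lemma pw_take' {u : List α} {d : ℕ} (hd : u.length = d) {m : ℕ} (hm : 0 < m) :
    (pw u m).take d = u := by rw [← hd, pw_take u m hm]

lemma exists_lyndon (w : List α) (hw : w ≠ []) :
    ∃ u k, IsLyndon u ∧ u.length ∣ w.length ∧ k < u.length ∧
      w = (pw u (w.length / u.length)).rotate k := by
  classical
  set n := w.length with hn
  have hn0 : 0 < n := List.length_pos_iff.mpr hw
  set R : Finset (List α) := (Finset.range n).image (fun i => w.rotate i) with hR
  have hRne : R.Nonempty := ⟨w, Finset.mem_image.mpr ⟨0, Finset.mem_range.mpr hn0,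
    List.rotate_zero w⟩⟩
  set v := R.min' hRne with hv
  obtain ⟨j, hjmem, hvj⟩ := Finset.mem_image.mp (R.min'_mem hRne)
  have hjn : j < n := Finset.mem_range.mp hjmem
  have hvlen : v.length = n := by rw [hv, ← hvj, List.length_rotate]
  have hvne : v ≠ [] := by
    intro hc; rw [hc] at hvlen; simp at hvlen; omega
  have hmin : ∀ i, v ≤ v.rotate i := by
    intro i
    apply R.min'_le
    apply Finset.mem_image.mpr
    refine ⟨(j + i) % n, Finset.mem_range.mpr (Nat.mod_lt _ hn0), ?_⟩
    have h1 : w.rotate ((j + i) % n) = w.rotate (j + i) := List.rotate_mod w (j + i)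
    rw [h1, ← List.rotate_rotate, hvj]
  set d := minPer v with hdd
  obtain ⟨hd0, hrotv⟩ := minPer_spec v hvne
  have hdn : d ∣ n := by
    have := minPer_dvd v hvne (i := v.length) (List.rotate_length v)
    rwa [hvlen] at this
  set u := v.take d with hu
  have hdlen : d ≤ n := Nat.le_of_dvd hn0 hdn
  have hud : u.length = d := by rw [hu, List.length_take]; omega
  have hvu : v = pw u (n / d) := by
    have := eq_pw_of_rotate hd0 v hrotv (by rw [hvlen]; exact hdn)
    rwa [hvlen] at this
  have hm0 : 0 < n / d := Nat.div_pos hdlen hd0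
  have hune : u ≠ [] := by
    intro hc; rw [hc] at hud; simp at hud; omega
  have hlyndon : IsLyndon u := by
    refine ⟨hune, ?_⟩
    intro i hi0 hid
    rw [hud] at hid
    have hne : u.rotate i ≠ u := by
      intro he
      have hvr : v.rotate i = v := by
        rw [hvu, pw_rotate_of_le u _ i (by omega), he]
      exact absurd (minPer_le v hi0 hvr) (not_le.mpr hid)
    rcases lt_trichotomy u (u.rotate i) with h | h | h
    · exact h
    · exact absurd h.symm hne
    · exfalso
      have hvr : v.rotate i = pw (u.rotate i) (n / d) := by
        rw [hvu, pw_rotate_of_le u _ i (by omega)]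
      have hlt : v.rotate i < v := by
        rw [hvr, hvu]
        exact pw_lt_pw h (by rw [List.length_rotate]) _ hm0
      exact absurd (hmin i) (not_le.mpr hlt)
  refine ⟨u, (n - j) % d, hlyndon, by rw [hud]; exact hdn, by rw [hud]; exact Nat.mod_lt _ hd0, ?_⟩
  rw [hud]
  have h2 : (pw u (n / d)).rotate ((n - j) % d) = (pw u (n / d)).rotate (n - j) := by
    conv_rhs => rw [pw_rotate_mod u (n / d) (n - j)]
    rw [hud]
  rw [h2, ← hvu, hv, ← hvj, List.rotate_rotate, Nat.add_sub_cancel' (le_of_lt hjn)]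
  exact (List.rotate_length w).symm


lemma pw_ne_nil {u : List α} (hu : u ≠ []) {m : ℕ} (hm : 0 < m) : pw u m ≠ [] := by
  intro hc
  have := congrArg List.length hc
  rw [pw_length] at this
  simp at this
  rcases this with h | h
  · omega
  · exact hu h

lemma minPer_pw_rotate {u : List α} (hu : IsLyndon u) {m : ℕ} (hm : 0 < m) (k : ℕ) :
    minPer ((pw u m).rotate k) = u.length := by
  have hune : u ≠ [] := hu.1
  have hd0 : 0 < u.length := List.length_pos_iff.mpr hune
  set d := u.length with hd
  set z := (pw u m).rotate k with hz
  have hz1 : z.rotate d = z := by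
    rw [hz, List.rotate_rotate, add_comm, ← List.rotate_rotate, pw_rotate]
  have key : ∀ e, z.rotate e = z → d ∣ e := by
    intro e he
    have h1 : (pw u m).rotate e = pw u m := by
      have h2 : ((pw u m).rotate e).rotate k = (pw u m).rotate k := by
        rw [List.rotate_rotate, add_comm, ← List.rotate_rotate]
        exact he
      exact List.rotate_eq_rotate.mp h2
    have h2 : (pw u m).rotate (e % d) = pw u m := by
      rw [← pw_rotate_mod]; exact h1
    have h3 : pw (u.rotate (e % d)) m = pw u m := by
      rw [← pw_rotate_of_le u m _ (le_of_lt (Nat.mod_lt _ hd0))]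
      exact h2
    have h4 : u.rotate (e % d) = u := by
      have h5 := congrArg (fun x : List α => x.take d) h3
      rwa [pw_take' (List.length_rotate u _) hm, pw_take' rfl hm] at h5
    rcases Nat.eq_zero_or_pos (e % d) with h6 | h6
    · exact Nat.dvd_of_mod_eq_zero h6
    · exfalso
      have := hu.2 (e % d) h6 (Nat.mod_lt _ hd0)
      rw [h4] at this
      exact lt_irrefl _ this
  have hzne : z ≠ [] := by
    rw [hz]
    intro hc
    rw [← List.length_eq_zero_iff, List.length_rotate, pw_length] at hc
    have : d = 0 := by
      rcases Nat.mul_eq_zero.mp hc with h | h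
      · omega
      · exact h
    omega
  exact Nat.dvd_antisymm (minPer_dvd z hzne hz1) (key (minPer z) (minPer_spec z hzne).2)

lemma lyndon_rotate_eq {u u' : List α} (hu : IsLyndon u) (hu' : IsLyndon u') {n k k' d : ℕ}
    (hd : u.length = d) (hd' : u'.length = d) (hd0 : 0 < d) (hdn : d ∣ n) (hn : 0 < n)
    (hk : k ≤ n)
    (h : (pw u (n / d)).rotate k = (pw u' (n / d)).rotate k') :
    u = u'.rotate ((k' + (n - k)) % d) := by
  have hm : 0 < n / d := Nat.div_pos (Nat.le_of_dvd hn hdn) hd0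
  have hrotn : ∀ x : List α, x.length = d → (pw x (n / d)).rotate n = pw x (n / d) := by
    intro x hx
    obtain ⟨c, hc⟩ := hdn
    rw [hc, ← hx, pw_rotate_mul]
  have h1 : pw u (n / d) = ((pw u' (n / d)).rotate k').rotate (n - k) := by
    rw [← h, List.rotate_rotate, Nat.add_sub_cancel' hk, hrotn u hd]
  rw [List.rotate_rotate] at h1
  have h2 : (pw u' (n / d)).rotate (k' + (n - k)) =
      (pw u' (n / d)).rotate ((k' + (n - k)) % d) := by
    conv_lhs => rw [pw_rotate_mod]
    rw [hd']
  have h3 : pw u (n / d) = pw (u'.rotate ((k' + (n - k)) % d)) (n / d) := by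
    rw [h1, h2, pw_rotate_of_le u' _ _ (by rw [hd']; exact le_of_lt (Nat.mod_lt _ hd0))]
  have h4 := congrArg (fun x : List α => x.take d) h3
  rwa [pw_take' hd hm, pw_take' (by rw [List.length_rotate, hd']) hm] at h4

lemma lyndon_unique {u u' : List α} (hu : IsLyndon u) (hu' : IsLyndon u') {n k k' : ℕ}
    (hn : 0 < n) (hdn : u.length ∣ n) (hdn' : u'.length ∣ n) (hk : k < u.length)
    (hk' : k' < u'.length)
    (h : (pw u (n / u.length)).rotate k = (pw u' (n / u'.length)).rotate k') :
    u = u' ∧ k = k' := by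
  have hd0 : 0 < u.length := by omega
  have hd0' : 0 < u'.length := by omega
  have hm : 0 < n / u.length := Nat.div_pos (Nat.le_of_dvd hn hdn) hd0
  have hm' : 0 < n / u'.length := Nat.div_pos (Nat.le_of_dvd hn hdn') hd0'
  have hdd' : u.length = u'.length := by
    have h1 := minPer_pw_rotate hu hm k
    have h2 := minPer_pw_rotate hu' hm' k'
    rw [h] at h1
    exact h1.symm.trans h2
  set d := u.length with hdef
  have hkn : k ≤ n := le_trans (le_of_lt hk) (Nat.le_of_dvd hn hdn)
  have hkn' : k' ≤ n := le_trans (le_of_lt hk') (Nat.le_of_dvd hn hdn')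
  have hmm : n / u'.length = n / d := by rw [← hdd']
  rw [hmm] at h
  have he1 := lyndon_rotate_eq hu hu' rfl hdd'.symm hd0 hdn hn hkn h
  have he2 := lyndon_rotate_eq hu' hu hdd'.symm rfl hd0 hdn hn hkn' h.symm
  set e := (k' + (n - k)) % d with hee
  set e' := (k + (n - k')) % d with hee'
  have helt : e < d := by rw [hee]; exact Nat.mod_lt _ hd0
  have he'lt : e' < d := by rw [hee']; exact Nat.mod_lt _ hd0
  rcases Nat.eq_zero_or_pos e with he0 | hepos
  · -- e = 0 : u = u' and k = k'
    rw [he0, List.rotate_zero] at he1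
    refine ⟨he1, ?_⟩
    have hdvd : d ∣ k' + (n - k) := Nat.dvd_of_mod_eq_zero (hee ▸ he0)
    obtain ⟨t, ht⟩ := hdvd
    have heq : k' + n = d * t + k := by omega
    have hmod := congrArg (fun x => x % d) heq
    obtain ⟨s, hsn⟩ := hdn
    rw [hsn] at hmod
    rw [Nat.add_mul_mod_self_left, Nat.mul_add_mod] at hmod
    rw [Nat.mod_eq_of_lt (show k' < d by omega), Nat.mod_eq_of_lt (show k < d by omega)] at hmod
    omega
  · exfalso
    have hlt1 := hu'.2 e hepos (by omega : e < u'.length)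
    rw [← he1] at hlt1
    rcases Nat.eq_zero_or_pos e' with he0' | hepos'
    · rw [he0', List.rotate_zero] at he2
      rw [he2] at hlt1
      exact lt_irrefl _ hlt1
    · have hlt2 := hu.2 e' hepos' (by omega : e' < u.length)
      rw [← he2] at hlt2
      exact lt_asymm hlt1 hlt2

def wordsF : ℕ → Finset (List Bool)
  | 0 => {[]}
  | n+1 => (wordsF n).biUnion (fun w => {true :: w, false :: w})

lemma mem_wordsF {n : ℕ} {w : List Bool} : w ∈ wordsF n ↔ w.length = n := by
  induction n generalizing w with
  | zero => simp [wordsF, List.length_eq_zero_iff]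
  | succ n ih =>
    simp only [wordsF, Finset.mem_biUnion, Finset.mem_insert, Finset.mem_singleton]
    constructor
    · rintro ⟨a, ha, rfl | rfl⟩ <;> simp [ih.mp ha]
    · intro hw
      cases w with
      | nil => simp at hw
      | cons b t =>
        refine ⟨t, ih.mpr (by simpa using hw), ?_⟩
        cases b
        · right; rfl
        · left; rfl

lemma card_wordsF (n : ℕ) : (wordsF n).card = 2 ^ n := by
  induction n with
  | zero => simp [wordsF]
  | succ n ih =>
    rw [show wordsF (n+1) = (wordsF n).biUnion (fun w => {true :: w, false :: w}) from rfl]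
    rw [Finset.card_biUnion]
    · have h2 : ∀ w : List Bool, ({true :: w, false :: w} : Finset (List Bool)).card = 2 := by
        intro w
        rw [Finset.card_insert_of_notMem (by simp), Finset.card_singleton]
      rw [Finset.sum_congr rfl (fun w _ => h2 w), Finset.sum_const, ih]
      ring
    · intro x _ y _ hxy
      simp only [Finset.disjoint_left, Finset.mem_insert, Finset.mem_singleton]
      rintro a (rfl | rfl) (h | h) <;> simp_all

open scoped Classical in
noncomputable def lyndonF (d : ℕ) : Finset (List Bool) :=
  (wordsF d).filter (fun w => IsLyndon w)

lemma mem_lyndonF {d : ℕ} {w : List Bool} : w ∈ lyndonF d ↔ w.length = d ∧ IsLyndon w := by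
  classical
  simp [lyndonF, mem_wordsF]

lemma L2_eq (d : ℕ) : L2 d = (lyndonF d).card := by
  rw [L2, ← Nat.card_eq_finsetCard]
  apply Nat.card_congr
  exact Equiv.subtypeEquivRight (fun w => mem_lyndonF.symm)

lemma key_count (n : ℕ) (hn : 0 < n) : 2 ^ n = ∑ d ∈ n.divisors, d * L2 d := by
  classical
  have hdisj : ∀ d ∈ n.divisors, ∀ d' ∈ n.divisors, d ≠ d' →
      Disjoint ((lyndonF d) ×ˢ (Finset.range d)) ((lyndonF d') ×ˢ (Finset.range d')) := by
    intro d _ d' _ hdd'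
    simp only [Finset.disjoint_left, Finset.mem_product]
    rintro ⟨u, k⟩ ⟨h1, _⟩ ⟨h3, _⟩
    exact hdd' ((mem_lyndonF.mp h1).1.symm.trans (mem_lyndonF.mp h3).1)
  have hbij : ((n.divisors).biUnion
      (fun d => (lyndonF d) ×ˢ (Finset.range d))).card = (wordsF n).card := by
    apply Finset.card_bij (fun p _ => (pw p.1 (n / p.1.length)).rotate p.2)
    · intro p hp
      obtain ⟨d, hd, hpd⟩ := Finset.mem_biUnion.mp hp
      obtain ⟨h1, _⟩ := Finset.mem_product.mp hpd
      have hl : p.1.length = d := (mem_lyndonF.mp h1).1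
      have hdn : d ∣ n := (Nat.mem_divisors.mp hd).1
      rw [mem_wordsF, List.length_rotate, pw_length, hl, Nat.div_mul_cancel hdn]
    · rintro ⟨u, k⟩ hp ⟨u', k'⟩ hq heq
      obtain ⟨d, hd, hpd⟩ := Finset.mem_biUnion.mp hp
      obtain ⟨h1, h2⟩ := Finset.mem_product.mp hpd
      obtain ⟨d', hd', hqd⟩ := Finset.mem_biUnion.mp hq
      obtain ⟨h3, h4⟩ := Finset.mem_product.mp hqd
      have hu := (mem_lyndonF.mp h1).2
      have hu' := (mem_lyndonF.mp h3).2
      have hl : u.length = d := (mem_lyndonF.mp h1).1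
      have hl' : u'.length = d' := (mem_lyndonF.mp h3).1
      have huniq := lyndon_unique hu hu' hn (hl ▸ (Nat.mem_divisors.mp hd).1)
        (hl' ▸ (Nat.mem_divisors.mp hd').1) (hl ▸ Finset.mem_range.mp h2)
        (hl' ▸ Finset.mem_range.mp h4) heq
      simp only [Prod.mk.injEq]
      exact ⟨huniq.1, huniq.2⟩
    · intro w hw
      have hwn : w.length = n := mem_wordsF.mp hw
      have hwne : w ≠ [] := by
        intro hc; rw [hc] at hwn; simp at hwn; omega
      obtain ⟨u, k, hly, hdvd, hk, hrep⟩ := exists_lyndon w hwne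
      rw [hwn] at hdvd hrep
      refine ⟨(u, k), Finset.mem_biUnion.mpr ⟨u.length,
        Nat.mem_divisors.mpr ⟨hdvd, hn.ne'⟩,
        Finset.mem_product.mpr ⟨mem_lyndonF.mpr ⟨rfl, hly⟩, Finset.mem_range.mpr hk⟩⟩, hrep.symm⟩
  rw [← card_wordsF n, ← hbij, Finset.card_biUnion hdisj]
  apply Finset.sum_congr rfl
  intro d _
  rw [Finset.card_product, Finset.card_range, L2_eq, mul_comm]

end ListPart


lemma sum_range_double {M : Type*} [AddCommMonoid M] (N : ℕ) (f : ℕ → M) :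
    ∑ m ∈ Finset.range (2 * N), f m = ∑ q ∈ Finset.range N, (f (2 * q) + f (2 * q + 1)) := by
  induction N with
  | zero => simp
  | succ N ih =>
    rw [show 2 * (N + 1) = 2 * N + 1 + 1 by ring, Finset.sum_range_succ, Finset.sum_range_succ,
      ih, Finset.sum_range_succ]
    abel

lemma binAdj_pow (V : ℕ) (hV : 0 < V) : ∀ n, 1 ≤ n → ∀ i j : Fin V,
    ((binAdj V) ^ n) i j =
      ((Finset.range (2 ^ n)).filter (fun m => (2 ^ n * i.val + m) % V = j.val)).card := by
  intro n
  induction n with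
  | zero => omega
  | succ n ih =>
    intro _ i j
    rcases Nat.eq_zero_or_pos n with rfl | hn
    · rw [pow_one]
      show (if (2 * i.val) % V = j.val then 1 else 0)
          + (if (2 * i.val + 1) % V = j.val then 1 else 0) = _
      rw [Finset.card_filter, show (2:ℕ)^1 = 2 from rfl, Finset.sum_range_succ,
        Finset.sum_range_succ, Finset.sum_range_zero]
      norm_num
    · rw [pow_succ, Matrix.mul_apply]
      have hL : ∀ k : Fin V, ((binAdj V) ^ n) i k * (binAdj V) k j
          = ∑ m ∈ Finset.range (2 ^ n),
              if (2 ^ n * i.val + m) % V = k.val then (binAdj V) k j else 0 := by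
        intro k
        rw [ih hn i k, ← Finset.sum_filter, Finset.sum_const, smul_eq_mul]
      rw [Finset.sum_congr rfl (fun k _ => hL k), Finset.sum_comm]
      have hinner : ∀ m : ℕ,
          (∑ k : Fin V, if (2 ^ n * i.val + m) % V = k.val then (binAdj V) k j else 0)
          = (if (2 ^ (n+1) * i.val + (2 * m)) % V = j.val then 1 else 0)
            + (if (2 ^ (n+1) * i.val + (2 * m + 1)) % V = j.val then 1 else 0) := by
        intro m
        set c : ℕ := (2 ^ n * i.val + m) % V with hc
        have hcV : c < V := Nat.mod_lt _ hV
        set k₀ : Fin V := ⟨c, hcV⟩ with hk₀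
        rw [Finset.sum_eq_single k₀ (fun k _ hk => by
            rw [if_neg]; intro hcon; exact hk (Fin.ext hcon.symm))
          (fun h => absurd (Finset.mem_univ k₀) h)]
        rw [if_pos rfl]
        show (if (2 * c) % V = j.val then 1 else 0)
            + (if (2 * c + 1) % V = j.val then 1 else 0) = _
        have e1 : (2 * c) % V = (2 ^ (n+1) * i.val + 2 * m) % V := by
          have h : (2 * c) % V = (2 * (2 ^ n * i.val + m)) % V :=
            Nat.ModEq.mul_left 2 (Nat.mod_modEq (2 ^ n * i.val + m) V)
          rw [h]; congr 1; ring
        have e2 : (2 * c + 1) % V = (2 ^ (n+1) * i.val + (2 * m + 1)) % V := by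
          have h : (2 * c + 1) % V = (2 * (2 ^ n * i.val + m) + 1) % V :=
            Nat.ModEq.add_right 1 (Nat.ModEq.mul_left 2 (Nat.mod_modEq _ V))
          rw [h]; congr 1; ring
        rw [e1, e2]
      rw [Finset.sum_congr rfl (fun m _ => hinner m)]
      rw [Finset.card_filter, show (2:ℕ)^(n+1) = 2 * 2^n by ring, sum_range_double]

lemma count_mod (g V' t : ℕ) (hV' : 0 < V') (ht : t < V') :
    ((Finset.range (g * V')).filter (fun i => i % V' = t)).card = g := by
  have key : ((Finset.range (g * V')).filter (fun i => i % V' = t)).card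
      = (Finset.range g).card := by
    apply Finset.card_bij (fun i _ => i / V')
    · intro i hi
      simp only [Finset.mem_filter, Finset.mem_range] at hi
      exact Finset.mem_range.mpr ((Nat.div_lt_iff_lt_mul hV').mpr (by omega))
    · intro i hi i' hi' heq
      simp only [Finset.mem_filter, Finset.mem_range] at hi hi'
      have e1 := Nat.div_add_mod i V'
      have e2 := Nat.div_add_mod i' V'
      rw [heq] at e1
      set x := V' * (i' / V') with hx
      omega
    · intro q hq
      have hqg : q < g := Finset.mem_range.mp hq
      have hdiv : (q * V' + t) / V' = q := by
        rw [mul_comm, Nat.mul_add_div hV', Nat.div_eq_of_lt ht, add_zero]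
      have hmod : (q * V' + t) % V' = t := by
        rw [mul_comm, Nat.mul_add_mod, Nat.mod_eq_of_lt ht]
      refine ⟨q * V' + t, ?_, hdiv⟩
      simp only [Finset.mem_filter, Finset.mem_range]
      refine ⟨?_, hmod⟩
      calc q * V' + t < q * V' + V' := by omega
        _ = (q + 1) * V' := by ring
        _ ≤ g * V' := Nat.mul_le_mul_right _ hqg
  rw [key, Finset.card_range]

lemma count_lin_aux (g a' V' m' : ℕ) (hg0 : 0 < g) (hV'0 : 0 < V')
    (hco : Nat.Coprime a' V') :
    ((Finset.range (g * V')).filter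
      (fun i => ((g * a') * i + g * m') % (g * V') = 0)).card = g := by
  haveI : NeZero V' := ⟨hV'0.ne'⟩
  set c : ZMod V' := (-(m' : ZMod V')) * ((a' : ZMod V'))⁻¹ with hc
  have hone : (a' : ZMod V') * (a' : ZMod V')⁻¹ = 1 := ZMod.coe_mul_inv_eq_one a' hco
  have hunit : IsUnit (a' : ZMod V') := IsUnit.of_mul_eq_one _ hone
  have hac : (a' : ZMod V') * c = -(m' : ZMod V') := by
    calc (a' : ZMod V') * ((-(m' : ZMod V')) * ((a' : ZMod V'))⁻¹)
        = (-(m' : ZMod V')) * ((a' : ZMod V') * ((a' : ZMod V'))⁻¹) := by ring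
      _ = -(m' : ZMod V') := by rw [hone, mul_one]
  have hcond : ∀ i : ℕ, (((g * a') * i + g * m') % (g * V') = 0) ↔ i % V' = c.val := by
    intro i
    have h1 : (g * a') * i + g * m' = g * (a' * i + m') := by ring
    rw [h1, ← Nat.dvd_iff_mod_eq_zero, Nat.mul_dvd_mul_iff_left hg0,
      ← ZMod.natCast_eq_zero_iff]
    push_cast
    constructor
    · intro h
      have h2 : (a' : ZMod V') * (i : ℕ) = (a' : ZMod V') * c := by
        rw [hac]; linear_combination h
      have h3 : ((i : ℕ) : ZMod V') = c := hunit.mul_left_cancel h2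
      have h4 := congrArg ZMod.val h3
      rwa [ZMod.val_natCast] at h4
    · intro h
      have h3 : ((i : ℕ) : ZMod V') = c := by
        have h4 : ((i : ℕ) : ZMod V') = ((c.val : ℕ) : ZMod V') := by
          rw [ZMod.natCast_eq_natCast_iff']
          rw [h, Nat.mod_eq_of_lt (ZMod.val_lt c)]
        rw [h4, ZMod.natCast_zmod_val]
      rw [h3]
      linear_combination hac
  rw [Finset.filter_congr (fun i _ => (hcond i))]
  exact count_mod g V' c.val hV'0 (ZMod.val_lt c)

lemma count_lin (V a m : ℕ) (hV : 0 < V) :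
    ((Finset.range V).filter (fun i => (a * i + m) % V = 0)).card =
      if Nat.gcd a V ∣ m then Nat.gcd a V else 0 := by
  set g := Nat.gcd a V with hg
  have hg0 : 0 < g := Nat.gcd_pos_of_pos_right a hV
  by_cases hgm : g ∣ m
  · rw [if_pos hgm]
    obtain ⟨a', ha'⟩ : g ∣ a := by rw [hg]; exact Nat.gcd_dvd_left a V
    obtain ⟨V', hV'⟩ : g ∣ V := by rw [hg]; exact Nat.gcd_dvd_right a V
    obtain ⟨m', hm'⟩ := hgm
    have hV'0 : 0 < V' := by
      rcases Nat.eq_zero_or_pos V' with rfl | h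
      · omega
      · exact h
    have hco : Nat.Coprime a' V' := by
      have h1 := Nat.coprime_div_gcd_div_gcd (m := a) (n := V) hg0
      have h2 : a / g = a' := by rw [ha']; exact Nat.mul_div_cancel_left _ hg0
      have h3 : V / g = V' := by rw [hV']; exact Nat.mul_div_cancel_left _ hg0
      rw [← hg] at h1
      rwa [h2, h3] at h1
    rw [hm', hV', ha']
    exact count_lin_aux g a' V' m' hg0 hV'0 hco
  · rw [if_neg hgm]
    rw [Finset.card_eq_zero, Finset.filter_eq_empty_iff]
    intro i _
    intro hcon
    have h1 : V ∣ a * i + m := Nat.dvd_of_mod_eq_zero hcon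
    have h2 : g ∣ a * i + m := dvd_trans (Nat.gcd_dvd_right a V) h1
    have h3 : g ∣ a * i := Dvd.dvd.mul_right (Nat.gcd_dvd_left a V) i
    exact hgm ((Nat.dvd_add_right h3).mp h2)

lemma count_dvd_range (N g : ℕ) (hN : 0 < N) (hg : 0 < g) :
    ((Finset.range N).filter (fun m => g ∣ m)).card = (N - 1) / g + 1 := by
  have hsplit : (Finset.range N).filter (fun m => g ∣ m)
      = insert 0 ((Finset.Ioc 0 (N-1)).filter (fun m => g ∣ m)) := by
    ext x
    simp only [Finset.mem_filter, Finset.mem_range, Finset.mem_insert, Finset.mem_Ioc]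
    constructor
    · rintro ⟨hx, hdvd⟩
      rcases Nat.eq_zero_or_pos x with rfl | hx0
      · exact Or.inl rfl
      · exact Or.inr ⟨⟨hx0, by omega⟩, hdvd⟩
    · rintro (rfl | ⟨⟨h1, h2⟩, hdvd⟩)
      · exact ⟨hN, dvd_zero g⟩
      · exact ⟨by omega, hdvd⟩
  rw [hsplit, Finset.card_insert_of_notMem (by simp), Nat.Ioc_filter_dvd_card_eq_div]


lemma trace_binAdj (V n : ℕ) (hV : 0 < V) (hn : 1 ≤ n) :
    Matrix.trace ((binAdj V) ^ n) = 2 ^ n - 1 + Nat.gcd (2 ^ n - 1) V := by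
  have hN : 2 ≤ 2 ^ n := by
    calc 2 = 2 ^ 1 := rfl
    _ ≤ 2 ^ n := Nat.pow_le_pow_right (by norm_num) hn
  set N := 2 ^ n with hNdef
  set g := Nat.gcd (N - 1) V with hgdef
  have hg0 : 0 < g := Nat.gcd_pos_of_pos_right _ hV
  have hgN : g ∣ N - 1 := Nat.gcd_dvd_left _ _
  rw [Matrix.trace]
  have hdiag : ∀ i : Fin V, ((binAdj V) ^ n).diag i
      = ∑ m ∈ Finset.range N, if (N * i.val + m) % V = i.val then 1 else 0 := by
    intro i
    rw [Matrix.diag_apply, binAdj_pow V hV n hn i i, Finset.card_filter]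
  rw [Finset.sum_congr rfl (fun i _ => hdiag i), Finset.sum_comm]
  have hinner : ∀ m : ℕ, (∑ i : Fin V, if (N * i.val + m) % V = i.val then 1 else 0)
      = if g ∣ m then g else 0 := by
    intro m
    rw [Fin.sum_univ_eq_sum_range (fun i => if (N * i + m) % V = i then 1 else 0) V]
    have hiff : ∀ i ∈ Finset.range V, ((N * i + m) % V = i ↔ ((N - 1) * i + m) % V = 0) := by
      intro i hi
      have hiV : i < V := Finset.mem_range.mp hi
      have hsplit : N * i + m = ((N - 1) * i + m) + i := by
        have h9 : (N - 1) * i + i = N * i := by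
          rw [Nat.sub_one_mul]
          have h8 : i ≤ N * i := Nat.le_mul_of_pos_left i (by omega)
          omega
        omega
      constructor
      · intro h
        have h2 : (((N - 1) * i + m) + i) % V = (0 + i) % V := by
          rw [← hsplit, h, zero_add, Nat.mod_eq_of_lt hiV]
        have h3 : ((N - 1) * i + m) % V = 0 % V := Nat.ModEq.add_right_cancel' i h2
        simpa using h3
      · intro h
        have h0 : ((N - 1) * i + m) % V = 0 % V := by simpa using h
        have h2 : (((N - 1) * i + m) + i) % V = (0 + i) % V := Nat.ModEq.add_right i h0
        rw [hsplit, h2, zero_add, Nat.mod_eq_of_lt hiV]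
    rw [← Finset.card_filter, Finset.filter_congr hiff, count_lin V (N - 1) m hV, ← hgdef]
  rw [Finset.sum_congr rfl (fun m _ => hinner m)]
  rw [← Finset.sum_filter, Finset.sum_const, smul_eq_mul,
    count_dvd_range N g (by omega) hg0, add_mul, one_mul, Nat.div_mul_cancel hgN]


section DBL

variable {p : ℕ}

lemma dbl_cancel (hp : Odd p) {k X Y : ℕ} (h : 2 ^ k * X ≡ 2 ^ k * Y [MOD p]) :
    X ≡ Y [MOD p] :=
  Nat.ModEq.cancel_left_of_coprime ((hp.coprime_two_right).pow_right k) h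

lemma dblPeriod_mem (hp : Odd p) (hp1 : 0 < p) (j : ℕ) :
    0 < dblPeriod p j ∧ 2 ^ (dblPeriod p j) * j % p = j % p := by
  have hco : Nat.Coprime 2 p := (hp.coprime_two_right).symm
  have hne : {c : ℕ | 0 < c ∧ 2 ^ c * j % p = j % p}.Nonempty := by
    refine ⟨Nat.totient p, Nat.totient_pos.mpr hp1, ?_⟩
    have h := Nat.ModEq.pow_totient hco
    have h2 := h.mul_right j
    simpa [Nat.ModEq] using h2
  exact Nat.sInf_mem hne

lemma dblPeriod_le (j c : ℕ) (hc0 : 0 < c) (hc : 2 ^ c * j % p = j % p) :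
    dblPeriod p j ≤ c := Nat.sInf_le ⟨hc0, hc⟩

/-- reduce exponents modulo a period -/
lemma pow_reduce {d j : ℕ} (hd : 2 ^ d * j % p = j % p) (m : ℕ) :
    2 ^ m * j % p = 2 ^ (m % d) * j % p := by
  rcases Nat.eq_zero_or_pos d with rfl | hd0
  · simp
  have hmul : ∀ q, 2 ^ (d * q) * j % p = j % p := by
    intro q
    induction q with
    | zero => simp
    | succ q ih =>
      have h1 : 2 ^ (d * (q + 1)) * j = 2 ^ (d * q) * (2 ^ d * j) := by
        rw [← mul_assoc, ← pow_add]; ring_nf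
      rw [h1]
      calc 2 ^ (d * q) * (2 ^ d * j) % p = 2 ^ (d * q) * j % p :=
            Nat.ModEq.mul_left _ hd
        _ = j % p := ih
  have h2 : 2 ^ m * j = 2 ^ (m % d) * (2 ^ (d * (m / d)) * j) := by
    rw [← mul_assoc, ← pow_add]
    congr 2
    exact (Nat.mod_add_div m d).symm
  rw [h2]
  exact Nat.ModEq.mul_left _ (hmul (m / d))

lemma dblPeriod_dvd (hp : Odd p) (hp1 : 0 < p) {j c : ℕ}
    (hc : 2 ^ c * j % p = j % p) : dblPeriod p j ∣ c := by
  obtain ⟨hd0, hd⟩ := dblPeriod_mem hp hp1 j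
  set d := dblPeriod p j
  have h1 : 2 ^ (c % d) * j % p = j % p := by rw [← pow_reduce hd c]; exact hc
  rcases Nat.eq_zero_or_pos (c % d) with h2 | h2
  · exact Nat.dvd_of_mod_eq_zero h2
  · exact absurd (dblPeriod_le _ _ h2 h1) (not_le.mpr (Nat.mod_lt _ hd0))

lemma dblPeriod_dvd_iff (hp : Odd p) (hp1 : 0 < p) {j n : ℕ} (hn : 0 < n) :
    2 ^ n * j % p = j % p ↔ dblPeriod p j ∣ n := by
  obtain ⟨hd0, hd⟩ := dblPeriod_mem hp hp1 j
  constructor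
  · exact dblPeriod_dvd hp hp1
  · intro hdvd
    obtain ⟨q, rfl⟩ := hdvd
    rw [pow_reduce hd]
    rcases Nat.eq_zero_or_pos (dblPeriod p j) with h | h
    · simp [h]
    · rw [Nat.mul_mod_right, pow_zero, one_mul]

/-- orbit of `j` under doubling -/
noncomputable def orb (p j : ℕ) : Finset ℕ :=
  (Finset.range (dblPeriod p j)).image (fun k => 2 ^ k * j % p)

lemma o_mem (hp : Odd p) {j : ℕ} (hj : j ∈ Finset.Ico 1 p) (k : ℕ) :
    2 ^ k * j % p ∈ Finset.Ico 1 p := by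
  obtain ⟨hj1, hjp⟩ := Finset.mem_Ico.mp hj
  have hp1 : 0 < p := by omega
  rw [Finset.mem_Ico]
  refine ⟨?_, Nat.mod_lt _ hp1⟩
  by_contra hcon
  push_neg at hcon
  have h0 : 2 ^ k * j % p = 0 := by omega
  have h1 : p ∣ 2 ^ k * j := Nat.dvd_of_mod_eq_zero h0
  have h2 : p ∣ j := (Nat.Coprime.dvd_of_dvd_mul_left ((hp.coprime_two_right).pow_right k) h1)
  have := Nat.le_of_dvd (by omega) h2
  omega

lemma o_period (hp : Odd p) {j : ℕ} (hj : j ∈ Finset.Ico 1 p) (k : ℕ) :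
    dblPeriod p (2 ^ k * j % p) = dblPeriod p j := by
  have hset : {c : ℕ | 0 < c ∧ 2 ^ c * (2 ^ k * j % p) % p = (2 ^ k * j % p) % p}
      = {c : ℕ | 0 < c ∧ 2 ^ c * j % p = j % p} := by
    ext c
    simp only [Set.mem_setOf_eq, and_congr_right_iff]
    intro _
    constructor
    · intro h
      apply dbl_cancel (k := k) hp
      have e1 : 2 ^ k * (2 ^ c * j) = 2 ^ c * (2 ^ k * j) := by ring
      have e2 : (2 ^ c * (2 ^ k * j)) ≡ 2 ^ c * (2 ^ k * j % p) [MOD p] :=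
        Nat.ModEq.mul_left _ (Nat.mod_modEq _ p).symm
      have e3 : (2 ^ k * j % p : ℕ) ≡ 2 ^ k * j [MOD p] := Nat.mod_modEq _ p
      calc 2 ^ k * (2 ^ c * j) = 2 ^ c * (2 ^ k * j) := e1
        _ ≡ 2 ^ c * (2 ^ k * j % p) [MOD p] := e2
        _ ≡ 2 ^ k * j % p [MOD p] := h
        _ ≡ 2 ^ k * j [MOD p] := e3
    · intro h
      have h1 : 2 ^ k * (2 ^ c * j) ≡ 2 ^ k * j [MOD p] := Nat.ModEq.mul_left _ h
      have e2 : 2 ^ c * (2 ^ k * j % p) ≡ 2 ^ c * (2 ^ k * j) [MOD p] :=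
        Nat.ModEq.mul_left _ (Nat.mod_modEq _ p)
      have e1 : 2 ^ c * (2 ^ k * j) = 2 ^ k * (2 ^ c * j) := by ring
      calc 2 ^ c * (2 ^ k * j % p) ≡ 2 ^ c * (2 ^ k * j) [MOD p] := e2
        _ = 2 ^ k * (2 ^ c * j) := e1
        _ ≡ 2 ^ k * j [MOD p] := h1
        _ ≡ 2 ^ k * j % p [MOD p] := (Nat.mod_modEq _ p).symm
  unfold dblPeriod
  rw [hset]

lemma o_card (hp : Odd p) {j : ℕ} (hj : j ∈ Finset.Ico 1 p) :
    (orb p j).card = dblPeriod p j := by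
  have hp1 : 0 < p := by
    have := Finset.mem_Ico.mp hj; omega
  obtain ⟨hd0, hd⟩ := dblPeriod_mem hp hp1 j
  set d := dblPeriod p j with hddef
  rw [orb, Finset.card_image_of_injOn, Finset.card_range]
  have key : ∀ a b : ℕ, a < b → b < d → 2 ^ a * j % p = 2 ^ b * j % p → False := by
    intro a b hab hbd heq
    have h1 : 2 ^ a * j ≡ 2 ^ a * (2 ^ (b - a) * j) [MOD p] := by
      have e1 : 2 ^ a * (2 ^ (b - a) * j) = 2 ^ b * j := by
        rw [← mul_assoc, ← pow_add]
        congr 2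
        omega
      rw [e1]
      exact heq
    have h2 : j ≡ 2 ^ (b - a) * j [MOD p] := dbl_cancel hp h1
    have h3 : 2 ^ (b - a) * j % p = j % p := h2.symm
    have h4 := dblPeriod_le (p := p) j (b - a) (by omega) h3
    omega
  intro k hk k' hk' heq
  simp only [Finset.coe_range, Set.mem_Iio] at hk hk'
  by_contra hne
  rcases Nat.lt_or_ge k k' with hlt | hge
  · exact key k k' hlt hk' heq
  · exact key k' k (by omega) hk heq.symm

lemma o_self {j : ℕ} (hj : j ∈ Finset.Ico 1 p) (hd0 : 0 < dblPeriod p j) :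
    j ∈ orb p j := by
  obtain ⟨hj1, hjp⟩ := Finset.mem_Ico.mp hj
  apply Finset.mem_image.mpr
  exact ⟨0, Finset.mem_range.mpr hd0, by simp [Nat.mod_eq_of_lt hjp]⟩

lemma o_elem_form {j x : ℕ} (hx : x ∈ orb p j) : ∃ k < dblPeriod p j, x = 2 ^ k * j % p := by
  obtain ⟨k, hk, hxk⟩ := Finset.mem_image.mp hx
  exact ⟨k, Finset.mem_range.mp hk, hxk.symm⟩

lemma o_eq (hp : Odd p) {j : ℕ} (hj : j ∈ Finset.Ico 1 p) (k : ℕ) :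
    orb p (2 ^ k * j % p) = orb p j := by
  have hp1 : 0 < p := by have := Finset.mem_Ico.mp hj; omega
  obtain ⟨hd0, hd⟩ := dblPeriod_mem hp hp1 j
  apply Finset.eq_of_subset_of_card_le
  · intro x hx
    obtain ⟨l, hl, hxl⟩ := o_elem_form hx
    rw [o_period hp hj k] at hl
    have e1 : x = 2 ^ (l + k) * j % p := by
      rw [hxl]
      have : 2 ^ l * (2 ^ k * j % p) ≡ 2 ^ l * (2 ^ k * j) [MOD p] :=
        Nat.ModEq.mul_left _ (Nat.mod_modEq _ p)
      calc 2 ^ l * (2 ^ k * j % p) % p = 2 ^ l * (2 ^ k * j) % p := this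
        _ = 2 ^ (l + k) * j % p := by rw [← mul_assoc, ← pow_add]
    rw [e1, pow_reduce hd (l + k)]
    apply Finset.mem_image.mpr
    exact ⟨(l + k) % (dblPeriod p j), Finset.mem_range.mpr (Nat.mod_lt _ hd0), rfl⟩
  · rw [o_card hp hj, o_card hp (o_mem hp hj k), o_period hp hj k]

lemma o_subset (hp : Odd p) {j : ℕ} (hj : j ∈ Finset.Ico 1 p) :
    orb p j ⊆ Finset.Ico 1 p := by
  intro x hx
  obtain ⟨k, _, hxk⟩ := o_elem_form hx
  rw [hxk]
  exact o_mem hp hj k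

lemma dblPeriod_le_sub_one (hp : Odd p) {j : ℕ} (hj : j ∈ Finset.Ico 1 p) :
    dblPeriod p j ≤ p - 1 := by
  have h1 := Finset.card_le_card (o_subset hp hj)
  rw [o_card hp hj, Nat.card_Ico] at h1
  exact h1

end DBL

section DBL2
variable {p : ℕ}

noncomputable def repD (p j : ℕ) : ℕ :=
  if h : (orb p j).Nonempty then (orb p j).min' h else 0

lemma repD_mem {j : ℕ} (h : (orb p j).Nonempty) : repD p j ∈ orb p j := by
  rw [repD, dif_pos h]; exact Finset.min'_mem _ h

lemma repD_congr {x j : ℕ} (h : orb p x = orb p j) : repD p x = repD p j := by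
  rw [repD, repD]
  by_cases hne : (orb p j).Nonempty
  · rw [dif_pos (h ▸ hne), dif_pos hne]
    congr 1
  · rw [dif_neg (fun hc => hne (h ▸ hc)), dif_neg hne]

lemma d_dvd_card (hp : Odd p) (d : ℕ) :
    d ∣ ((Finset.Ico 1 p).filter (fun j => dblPeriod p j = d)).card := by
  classical
  have hp1 : 0 < p := by
    rcases hp with ⟨t, ht⟩; omega
  set S := (Finset.Ico 1 p).filter (fun j => dblPeriod p j = d) with hSdef
  have hmemS : ∀ j, j ∈ S ↔ j ∈ Finset.Ico 1 p ∧ dblPeriod p j = d := by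
    intro j; rw [hSdef, Finset.mem_filter]
  have hcard := Finset.card_eq_sum_card_fiberwise
    (f := repD p) (s := S) (t := S.image (repD p))
    (fun x hx => Finset.mem_image_of_mem _ hx)
  have hfiber : ∀ j0 ∈ S.image (repD p),
      (S.filter (fun j => repD p j = j0)).card = d := by
    intro j0 hj0
    obtain ⟨j1, hj1S, hj1r⟩ := Finset.mem_image.mp hj0
    obtain ⟨hj1I, hj1d⟩ := (hmemS j1).mp hj1S
    have hd0 : 0 < d := hj1d ▸ (dblPeriod_mem hp hp1 j1).1
    have hne1 : (orb p j1).Nonempty := ⟨j1, o_self hj1I (by rw [hj1d]; exact hd0)⟩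
    have hj0orb : j0 ∈ orb p j1 := hj1r ▸ repD_mem hne1
    obtain ⟨k, hk, hj0k⟩ := o_elem_form hj0orb
    have horb_eq : orb p j0 = orb p j1 := by rw [hj0k]; exact o_eq hp hj1I k
    have hj0I : j0 ∈ Finset.Ico 1 p := by rw [hj0k]; exact o_mem hp hj1I k
    have hj0d : dblPeriod p j0 = d := by rw [hj0k, o_period hp hj1I k]; exact hj1d
    have hrepj0 : repD p j0 = j0 := by
      rw [repD_congr horb_eq, hj1r]
    have hfeq : S.filter (fun j => repD p j = j0) = orb p j0 := by
      apply Finset.Subset.antisymm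
      · intro j hj
        obtain ⟨hjS, hjr⟩ := Finset.mem_filter.mp hj
        obtain ⟨hjI, hjd⟩ := (hmemS j).mp hjS
        have hnej : (orb p j).Nonempty := ⟨j, o_self hjI (by rw [hjd]; exact hd0)⟩
        have hj0orbj : j0 ∈ orb p j := hjr ▸ repD_mem hnej
        obtain ⟨l, hl, hj0l⟩ := o_elem_form hj0orbj
        have : orb p j0 = orb p j := by rw [hj0l]; exact o_eq hp hjI l
        rw [this]
        exact o_self hjI (by rw [hjd]; exact hd0)
      · intro x hx
        obtain ⟨l, hl, hxl⟩ := o_elem_form hx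
        have hxI : x ∈ Finset.Ico 1 p := by rw [hxl]; exact o_mem hp hj0I l
        have hxd : dblPeriod p x = d := by rw [hxl, o_period hp hj0I l]; exact hj0d
        have horbx : orb p x = orb p j0 := by rw [hxl]; exact o_eq hp hj0I l
        apply Finset.mem_filter.mpr
        refine ⟨(hmemS x).mpr ⟨hxI, hxd⟩, ?_⟩
        rw [repD_congr horbx, hrepj0]
    rw [hfeq, o_card hp hj0I, hj0d]
  rw [hcard, Finset.sum_congr rfl hfiber, Finset.sum_const, smul_eq_mul]
  exact Dvd.intro_left _ rfl

lemma betap_mul (hp : Odd p) {d : ℕ} (hd : 0 < d) :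
    d * betap p d = ((Finset.Ico 1 p).filter (fun j => dblPeriod p j = d)).card := by
  rw [betap, mul_comm, Nat.div_mul_cancel (d_dvd_card hp d)]

end DBL2

lemma sum_betap {p : ℕ} (hp : Odd p) (hp1 : 0 < p) {n : ℕ} (hn : 1 ≤ n) :
    ∑ d ∈ n.divisors, d * betap p d = Nat.gcd (2 ^ n - 1) p - 1 := by
  classical
  set S := (Finset.Ico 1 p).filter (fun j => 2 ^ n * j % p = j % p) with hSdef
  have h1 : ∀ d ∈ n.divisors, d * betap p d
      = (S.filter (fun j => dblPeriod p j = d)).card := by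
    intro d hd
    obtain ⟨hdn, hn0⟩ := Nat.mem_divisors.mp hd
    have hd0 : 0 < d := Nat.pos_of_mem_divisors hd
    rw [betap_mul hp hd0]
    congr 1
    rw [hSdef, Finset.filter_filter]
    apply Finset.filter_congr
    intro j hj
    constructor
    · intro hper
      refine ⟨?_, hper⟩
      rw [dblPeriod_dvd_iff hp hp1 (by omega)]
      rw [hper]
      exact hdn
    · exact fun h => h.2
  have h2 : S.card = ∑ d ∈ n.divisors, (S.filter (fun j => dblPeriod p j = d)).card := by
    apply Finset.card_eq_sum_card_fiberwise
    intro j hj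
    obtain ⟨hjI, hjc⟩ := Finset.mem_filter.mp hj
    exact Nat.mem_divisors.mpr ⟨(dblPeriod_dvd_iff hp hp1 (by omega)).mp hjc, by omega⟩
  rw [Finset.sum_congr rfl h1, ← h2]
  -- S.card = gcd - 1
  have hcond : ∀ j : ℕ, (2 ^ n * j % p = j % p) ↔ ((2 ^ n - 1) * j + 0) % p = 0 := by
    intro j
    rw [add_zero, ← Nat.dvd_iff_mod_eq_zero, Nat.sub_one_mul,
      ← Nat.modEq_iff_dvd' (Nat.le_mul_of_pos_left j (by positivity))]
    exact ⟨fun h => h.symm, fun h => h.symm⟩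
  have hS' : (Finset.Ico 1 p).filter (fun j => ((2 ^ n - 1) * j + 0) % p = 0) = S := by
    rw [hSdef]
    apply Finset.filter_congr
    intro j _
    exact (hcond j).symm
  have hsplit : (Finset.range p).filter (fun j => ((2 ^ n - 1) * j + 0) % p = 0)
      = insert 0 ((Finset.Ico 1 p).filter (fun j => ((2 ^ n - 1) * j + 0) % p = 0)) := by
    ext x
    simp only [Finset.mem_filter, Finset.mem_range, Finset.mem_insert, Finset.mem_Ico]
    constructor
    · rintro ⟨hx, hc⟩
      rcases Nat.eq_zero_or_pos x with rfl | hx0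
      · exact Or.inl rfl
      · exact Or.inr ⟨⟨hx0, hx⟩, hc⟩
    · rintro (rfl | ⟨⟨h1', h2'⟩, hc⟩)
      · exact ⟨hp1, by simp⟩
      · exact ⟨h2', hc⟩
  have hcount := count_lin p (2 ^ n - 1) 0 hp1
  rw [if_pos (dvd_zero _)] at hcount
  rw [hsplit, hS'] at hcount
  have h0S : (0 : ℕ) ∉ S := by
    rw [hSdef]
    intro hc
    have := (Finset.mem_filter.mp hc).1
    simp at this
  rw [Finset.card_insert_of_notMem h0S] at hcount
  omega

/-- If `PO : ℕ → ℕ` satisfies `Tr(A_V^n) = ∑_{d ∣ n} d·PO(d)` for all `n ≥ 1`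
(with `V = p·2^r`, `p` odd), then `PO(n) = L₂(n) + β_p(n)`; in particular
`PO(n) = L₂(n)` whenever `n > p`. -/
theorem primitive_orbit_count (p r : ℕ) (hp : Odd p) (hp1 : 0 < p)
    (PO : ℕ → ℕ)
    (hPO : ∀ n, 1 ≤ n →
      Matrix.trace ((binAdj (p * 2 ^ r)) ^ n) = ∑ d ∈ n.divisors, d * PO d) :
    (∀ n, 1 ≤ n → PO n = L2 n + betap p n) ∧
      (∀ n, p < n → PO n = L2 n) := by
  have hg : ∀ n, 1 ≤ n → Matrix.trace ((binAdj (p * 2 ^ r)) ^ n)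
      = ∑ d ∈ n.divisors, d * (L2 d + betap p d) := by
    intro n hn
    have hV : 0 < p * 2 ^ r := by positivity
    rw [trace_binAdj (p * 2 ^ r) n hV hn]
    have h2n : 2 ^ n = 2 * 2 ^ (n - 1) := by
      rw [← pow_succ']
      congr 1
      omega
    have h1K : 1 ≤ 2 ^ (n - 1) := Nat.one_le_two_pow
    have hodd : Odd (2 ^ n - 1) := by
      rw [Nat.odd_iff]
      omega
    have hgcd : Nat.gcd (2 ^ n - 1) (p * 2 ^ r) = Nat.gcd (2 ^ n - 1) p := by
      apply Nat.dvd_antisymm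
      · apply Nat.dvd_gcd (Nat.gcd_dvd_left _ _)
        have hd := Nat.gcd_dvd_right (2 ^ n - 1) (p * 2 ^ r)
        have hdl := Nat.gcd_dvd_left (2 ^ n - 1) (p * 2 ^ r)
        have hco : Nat.Coprime (Nat.gcd (2 ^ n - 1) (p * 2 ^ r)) (2 ^ r) :=
          Nat.Coprime.coprime_dvd_left hdl ((hodd.coprime_two_right).pow_right r)
        exact hco.dvd_of_dvd_mul_right hd
      · exact Nat.dvd_gcd (Nat.gcd_dvd_left _ _)
          (dvd_mul_of_dvd_left (Nat.gcd_dvd_right _ _) _)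
    rw [hgcd]
    have hkey := key_count n (by omega)
    have hbeta := sum_betap hp hp1 hn
    have hg1 : 1 ≤ Nat.gcd (2 ^ n - 1) p := Nat.gcd_pos_of_pos_right _ hp1
    have hsum : ∑ d ∈ n.divisors, d * (L2 d + betap p d)
        = (∑ d ∈ n.divisors, d * L2 d) + ∑ d ∈ n.divisors, d * betap p d := by
      rw [← Finset.sum_add_distrib]
      apply Finset.sum_congr rfl
      intro d _
      ring
    rw [hsum, ← hkey, hbeta]
    omega
  have main : ∀ n, 1 ≤ n → PO n = L2 n + betap p n := by
    intro n
    induction n using Nat.strong_induction_on with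
    | _ n ih =>
      intro hn
      have e1 : ∑ d ∈ n.divisors, d * (L2 d + betap p d)
          = ∑ d ∈ n.divisors, d * PO d := (hg n hn).symm.trans (hPO n hn)
      have hmem : n ∈ n.divisors := Nat.mem_divisors_self n (by omega)
      rw [← Finset.sum_erase_add _ _ hmem, ← Finset.sum_erase_add _ _ hmem] at e1
      have herase : ∑ d ∈ n.divisors.erase n, d * (L2 d + betap p d)
          = ∑ d ∈ n.divisors.erase n, d * PO d := by
        apply Finset.sum_congr rfl
        intro d hd
        have hdmem := Finset.mem_of_mem_erase hd
        have hdn : d ≠ n := Finset.ne_of_mem_erase hd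
        have hdlt : d < n :=
          lt_of_le_of_ne (Nat.le_of_dvd (by omega) (Nat.mem_divisors.mp hdmem).1) hdn
        have hd1 : 1 ≤ d := Nat.pos_of_mem_divisors hdmem
        rw [ih d hdlt hd1]
      rw [herase] at e1
      have e2 : n * (L2 n + betap p n) = n * PO n := by omega
      exact (Nat.eq_of_mul_eq_mul_left (by omega) e2).symm
  refine ⟨main, ?_⟩
  intro n hpn
  have hn1 : 1 ≤ n := by omega
  rw [main n hn1]
  have hb0 : betap p n = 0 := by
    rw [betap]
    have hempty : (Finset.Ico 1 p).filter (fun j => dblPeriod p j = n) = ∅ := by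
      apply Finset.filter_eq_empty_iff.mpr
      intro j hj
      have hle := dblPeriod_le_sub_one hp hj
      omega
    rw [hempty]
    simp
  rw [hb0, add_zero]
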